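/- arXiv:1904.08081 — 7 statements merged into one kernel-verified Lean document; each statement's English description precedes it below -/
import Mathlib

section
/- Let k be a field and let G = (kˣ × kˣ) ⋊ ℤ/2ℤ, where the generator of ℤ/2ℤ acts on kˣ × kˣ by swapping the two factors. The map φ : GL₂(k) × G × kˣ → GL₂(k) × G defined by φ(A, B, t) = ((det A / t) · A, z(A,t) · B), where z(A,t) is the central element ((det A / t)⁴, (det A / t)⁴) of the kˣ × kˣ factor of G, is a surjective group homomorphism whose kernel is exactly the image of the homomorphism kˣ → GL₂(k) × G × kˣ sending t to (t·I, ((t⁴, t⁴), 0), t³); an inverse of the induced isomorphism is induced by (A, B) ↦ (A, B, det A). -/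
open Matrix

/-- The swap automorphism of `kˣ × kˣ`. -/
def swapAut (k : Type*) [Field k] : MulAut (kˣ × kˣ) :=
  MulEquiv.prodComm

/-- The action of ℤ/2ℤ on kˣ × kˣ in which the generator swaps the two factors. -/
def swapHom (k : Type*) [Field k] : Multiplicative (ZMod 2) →* MulAut (kˣ × kˣ) where
  toFun z := swapAut k ^ (Multiplicative.toAdd z).val
  map_one' := rfl
  map_mul' x y := by
    have hσ : swapAut k ^ 2 = 1 := by
      ext p <;> rfl
    have key : ∀ a b : ZMod 2, (a + b).val = (a.val + b.val) % 2 := by decide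
    have h2 : ∀ n : ℕ, swapAut k ^ (n % 2) = swapAut k ^ n := fun n => by
      conv_rhs => rw [← Nat.div_add_mod n 2]
      rw [pow_add, pow_mul, hσ, one_pow, one_mul]
    show swapAut k ^ (Multiplicative.toAdd x + Multiplicative.toAdd y).val = _
    rw [key, h2, pow_add]

/-- G = (kˣ × kˣ) ⋊ ℤ/2ℤ, the generator of ℤ/2ℤ acting by swapping the factors. -/
abbrev Gbe (k : Type*) [Field k] :=
  SemidirectProduct (kˣ × kˣ) (Multiplicative (ZMod 2)) (swapHom k)

/-! The element `(s • 1, inl (s⁴, s⁴))` of `GL₂(k) × G` is central, since `(s⁴, s⁴)` is fixed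
by the swap, and `χ(A, B, t) = det A / t` is a character; so `φ`, which multiplies the projection
`(A, B, t) ↦ (A, B)` by the central element at `χ`, is a homomorphism. As `χ(A, B, det A) = 1`,
`(A, B) ↦ (A, B, det A)` is a section of `φ`. If `φ(A, B, t) = 1`, then `(A, B)` is the central
element at `u = χ(A, B, t)⁻¹`, so `det A = u²` and `t = det A · u = u³`. -/

namespace SemidirectProduct

variable {N G : Type*} [Group N] [Group G] {φ : G →* MulAut N}

theorem commute_inl_of_forall_commute_of_forall_apply_eq {n : N} (hcomm : ∀ m, Commute n m)
    (hfix : ∀ g, φ g n = n) (x : N ⋊[φ] G) : Commute (inl n) x := by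
  ext
  · simp only [mul_left, left_inl, right_inl, map_one, MulAut.one_apply, hfix]
    exact hcomm x.left
  · simp only [mul_right, right_inl, one_mul, mul_one]

end SemidirectProduct

section

variable {k : Type*} [Field k]

theorem swapHom_apply_diag (z : Multiplicative (ZMod 2)) (c : kˣ) :
    swapHom k z (c, c) = (c, c) := by
  have hswap : swapAut k ∈ MulAction.stabilizer (MulAut (kˣ × kˣ)) (c, c) := rfl
  exact Subgroup.pow_mem _ hswap _

variable (k)

def quarticDiag : kˣ →* Gbe k :=
  SemidirectProduct.inl.comp ((powMonoidHom 4).prod (powMonoidHom 4))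

def centralScalar : kˣ →* GL (Fin 2) k × Gbe k :=
  (GeneralLinearGroup.scalar (Fin 2)).prod (quarticDiag k)

theorem commute_centralScalar (s : kˣ) (x : GL (Fin 2) k × Gbe k) :
    Commute (centralScalar k s) x :=
  Commute.prod (GeneralLinearGroup.scalar_commute s x.1)
    (SemidirectProduct.commute_inl_of_forall_commute_of_forall_apply_eq
      (fun m => Commute.all _ m) (fun z => swapHom_apply_diag z _) x.2)

def detRatio : GL (Fin 2) k × Gbe k × kˣ →* kˣ :=
  GeneralLinearGroup.det.comp (MonoidHom.fst _ _) / (MonoidHom.snd _ _).comp (MonoidHom.snd _ _)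

def twistHom : GL (Fin 2) k × Gbe k × kˣ →* GL (Fin 2) k × Gbe k :=
  ((centralScalar k).noncommCoprod (MonoidHom.id _) (commute_centralScalar k)).comp
    ((detRatio k).prod ((MonoidHom.id _).prodMap (MonoidHom.fst _ _)))

def kerParam : kˣ →* GL (Fin 2) k × Gbe k × kˣ :=
  (GeneralLinearGroup.scalar (Fin 2)).prod ((quarticDiag k).prod (powMonoidHom 3))

variable {k}

theorem detRatio_apply (A : GL (Fin 2) k) (B : Gbe k) (t : kˣ) :
    detRatio k (A, B, t) = GeneralLinearGroup.det A / t :=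
  rfl

theorem twistHom_apply (x : GL (Fin 2) k × Gbe k × kˣ) :
    twistHom k x = centralScalar k (detRatio k x) * (x.1, x.2.1) :=
  rfl

theorem twistHom_apply_det (A : GL (Fin 2) k) (B : Gbe k) :
    twistHom k (A, B, GeneralLinearGroup.det A) = (A, B) := by
  rw [twistHom_apply, detRatio_apply, div_self', map_one, one_mul]

theorem detRatio_kerParam (u : kˣ) : detRatio k (kerParam k u) = u⁻¹ := by
  rw [kerParam, MonoidHom.prod_apply, MonoidHom.prod_apply, detRatio_apply,
    GeneralLinearGroup.det_scalar, Fintype.card_fin, powMonoidHom_apply, pow_succ' u 2,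
    div_mul_cancel_right]

theorem ker_twistHom : (twistHom k).ker = (kerParam k).range := by
  ext x
  rw [MonoidHom.mem_ker, MonoidHom.mem_range, twistHom_apply]
  constructor
  · obtain ⟨A, B, t⟩ := x
    intro h
    set u := (detRatio k (A, B, t))⁻¹ with hu
    have hAB : (A, B) = centralScalar k u := by
      rw [hu, map_inv]
      exact eq_inv_of_mul_eq_one_right h
    have hA : A = GeneralLinearGroup.scalar (Fin 2) u := congrArg Prod.fst hAB
    have hB : B = quarticDiag k u := congrArg Prod.snd hAB
    have ht : t = u ^ 3 := by
      have hdet : GeneralLinearGroup.det A = u ^ 2 := by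
        rw [hA, GeneralLinearGroup.det_scalar, Fintype.card_fin]
      rw [← inv_eq_iff_eq_inv, detRatio_apply, hdet, eq_div_iff_mul_eq',
        inv_mul_eq_iff_eq_mul, ← pow_succ'] at hu
      exact hu
    exact ⟨u, by rw [hA, hB, ht]; rfl⟩
  · rintro ⟨u, rfl⟩
    rw [detRatio_kerParam, map_inv]
    exact inv_mul_cancel _

end

/-- For a field k, the map φ : GL₂(k) × G × kˣ → GL₂(k) × G given by
φ(A, B, t) = ((det A / t)·A, ((det A / t)⁴, (det A / t)⁴)·B) is a surjective group
homomorphism whose kernel is exactly the image of the homomorphism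
ψ : kˣ → GL₂(k) × G × kˣ, ψ(t) = (t·I, ((t⁴, t⁴), 0), t³); an inverse of the induced
isomorphism is induced by (A, B) ↦ (A, B, det A), i.e. φ(A, B, det A) = (A, B). -/
theorem stmt1 (k : Type*) [Field k] :
    ∃ (φ : GL (Fin 2) k × Gbe k × kˣ →* GL (Fin 2) k × Gbe k)
      (ψ : kˣ →* GL (Fin 2) k × Gbe k × kˣ),
      (∀ (A : GL (Fin 2) k) (B : Gbe k) (t : kˣ),
        φ (A, B, t) =
          (Units.map (algebraMap k (Matrix (Fin 2) (Fin 2) k)).toMonoidHom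
              (Matrix.GeneralLinearGroup.det A / t) * A,
            SemidirectProduct.inl
                ((Matrix.GeneralLinearGroup.det A / t) ^ 4,
                  (Matrix.GeneralLinearGroup.det A / t) ^ 4) * B)) ∧
      (∀ t : kˣ,
        ψ t = (Units.map (algebraMap k (Matrix (Fin 2) (Fin 2) k)).toMonoidHom t,
          SemidirectProduct.inl (t ^ 4, t ^ 4), t ^ 3)) ∧
      Function.Surjective φ ∧
      φ.ker = ψ.range ∧
      (∀ (A : GL (Fin 2) k) (B : Gbe k),
        φ (A, B, Matrix.GeneralLinearGroup.det A) = (A, B)) :=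
  ⟨twistHom k, kerParam k, fun _ _ _ => rfl, fun _ => rfl,
    fun y => ⟨_, twistHom_apply_det y.1 y.2⟩, ker_twistHom, twistHom_apply_det⟩
end

section
/- The 7×7 matrix over the polynomial ring ℤ[λ₁, λ₂] with rows (120λ₁λ₂, −60λ₂, 0, 1, 0, 0, 0), (0, 60λ₁λ₂, −36λ₂, 0, 1, 0, 0), (0, 0, 24λ₁λ₂, −18λ₂, 0, 1, 0), (0, 0, 0, 6λ₁λ₂, −6λ₂, 0, 1), (120(λ₁² − λ₂), −60λ₁, 12, 0, 0, 0, 0), (0, 60(λ₁² − λ₂), −36λ₁, 9, 0, 0, 0), (0, 0, 12(λ₁² − λ₂), −9λ₁, 3, 0, 0) has determinant 86400(λ₁² − 4λ₂)³; in particular this matrix is nonsingular. -/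
/-!
Columns 6 and 5 each contain a single nonzero entry, a `1`, so two Laplace expansions reduce the
determinant to that of a 5 × 5 minor, which is expanded directly. Evaluating at
(λ₁, λ₂) = (0, 1) gives `86400 * (-4) ^ 3 ≠ 0`.
-/

open MvPolynomial

theorem Matrix.det_eq_of_forall_ne_col_eq_zero {R : Type*} [CommRing R] {n : ℕ}
    (A : Matrix (Fin (n + 1)) (Fin (n + 1)) R) {i j : Fin (n + 1)}
    (h : ∀ k, k ≠ i → A k j = 0) :
    A.det = (-1) ^ (i + j : ℕ) * A i j * (A.submatrix i.succAbove j.succAbove).det := by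
  rw [det_succ_column A j, Finset.sum_eq_single i (fun k _ hk => by simp [h k hk]) (by simp)]

/-- The 7×7 matrix over ℤ[λ₁, λ₂] (with λ₁ = X 0, λ₂ = X 1) expressing the classes
s₁₀, s₁₁, s₁₂, s₁₃, s₀₀, s₀₁, s₀₂′ in the basis s₆⁰, …, s₆⁶ has determinant
86400(λ₁² − 4λ₂)³; in particular it is nonsingular. -/
theorem stmt7 (M : Matrix (Fin 7) (Fin 7) (MvPolynomial (Fin 2) ℤ))
    (hM : M = !![120 * X 0 * X 1, -(60 * X 1), 0, 1, 0, 0, 0;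
      0, 60 * X 0 * X 1, -(36 * X 1), 0, 1, 0, 0;
      0, 0, 24 * X 0 * X 1, -(18 * X 1), 0, 1, 0;
      0, 0, 0, 6 * X 0 * X 1, -(6 * X 1), 0, 1;
      120 * ((X 0) ^ 2 - X 1), -(60 * X 0), 12, 0, 0, 0, 0;
      0, 60 * ((X 0) ^ 2 - X 1), -(36 * X 0), 9, 0, 0, 0;
      0, 0, 12 * ((X 0) ^ 2 - X 1), -(9 * X 0), 3, 0, 0]) :
    M.det = 86400 * ((X 0) ^ 2 - 4 * X 1) ^ 3 ∧ M.det ≠ 0 := by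
  have hdet : M.det = 86400 * ((X 0) ^ 2 - 4 * X 1) ^ 3 := by
    subst hM
    rw [Matrix.det_eq_of_forall_ne_col_eq_zero _ (i := 3) (j := 6) (by decide),
      Matrix.det_eq_of_forall_ne_col_eq_zero _ (i := 2) (j := 5) (by decide)]
    simp [Matrix.det_succ_row_zero, Fin.sum_univ_succ, Fin.succAbove]
    ring
  refine ⟨hdet, fun h => ?_⟩
  simpa [hdet] using congrArg (eval ![0, 1]) h
end

section
/- In the polynomial ring ℤ[λ₁, λ₂, t], set r₁ = 20λ₁λ₂ + (t² − λ₁t − 44λ₂)(t − 2λ₁), r₂ = 24λ₁² − 48λ₂ + (12t − 48λ₁)(t − 2λ₁), r₃ = 60(λ₁² − 4λ₂)(t − 3λ₁)(t − 2λ₁). Then the ideal (r₁, r₂, r₃, t − 2λ₁) equals the ideal (t − 2λ₁, 24λ₁² − 48λ₂, 20λ₁λ₂); equivalently, the quotient ring ℤ[λ₁, λ₂, t]/(r₁, r₂, r₃, t − 2λ₁) is isomorphic to ℤ[λ₁, λ₂]/(24λ₁² − 48λ₂, 20λ₁λ₂). -/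
open MvPolynomial

/-!
Substituting `t = 2λ₁` is a surjection `ℤ[λ₁, λ₂, t] → ℤ[λ₁, λ₂]` whose kernel is `(t − 2λ₁)`,
since renaming `λᵢ ↦ λᵢ` is a section of it that is inverse to it modulo `t − 2λ₁`. Under the
substitution `r₁, r₂, r₃` become `20λ₁λ₂, 24λ₁² − 48λ₂, 0`, so both ideals of the statement contain
the kernel and are therefore the preimage of `(24λ₁² − 48λ₂, 20λ₁λ₂)`; the quotient by the preimage
of an ideal under a surjection is the quotient by that ideal.
-/

namespace Ideal

variable {R S F : Type*} [CommRing R] [CommRing S] [FunLike F R S] [RingHomClass F R S] {f : F}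

noncomputable def quotientComapEquivOfSurjective (hf : Function.Surjective f) (J : Ideal S) :
    R ⧸ J.comap f ≃+* S ⧸ J :=
  RingEquiv.ofBijective (quotientMap J (f : R →+* S) le_rfl)
    ⟨quotientMap_injective, quotientMap_surjective hf⟩

@[simp]
theorem quotientComapEquivOfSurjective_mk (hf : Function.Surjective f) (J : Ideal S) (x : R) :
    quotientComapEquivOfSurjective hf J (Quotient.mk _ x) = Quotient.mk J (f x) :=
  rfl

theorem span_eq_comap_span_image (hf : Function.Surjective f) {s : Set R}
    (hker : RingHom.ker f ≤ span s) : span s = (span (f '' s)).comap f := by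
  rw [← map_span, comap_map_of_surjective f hf, ← RingHom.ker_eq_comap_bot, sup_of_le_left hker]

end Ideal

namespace MvPolynomial

variable {R : Type*} [CommRing R] {n : ℕ} (p : MvPolynomial (Fin n) R)

theorem aeval_snoc_comp_rename_castSucc :
    (aeval (Fin.snoc X p : Fin (n + 1) → MvPolynomial (Fin n) R)).comp
      (rename Fin.castSucc) = AlgHom.id R _ := by
  ext i
  simp

theorem aeval_snoc_surjective :
    Function.Surjective (aeval (R := R) (Fin.snoc X p : Fin (n + 1) → MvPolynomial (Fin n) R)) :=
  fun q ↦ ⟨rename Fin.castSucc q, AlgHom.congr_fun (aeval_snoc_comp_rename_castSucc p) q⟩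

theorem ker_aeval_snoc :
    RingHom.ker (aeval (Fin.snoc X p : Fin (n + 1) → MvPolynomial (Fin n) R)) =
      Ideal.span {X (Fin.last n) - rename Fin.castSucc p} := by
  set K := Ideal.span {X (Fin.last n) - rename Fin.castSucc p}
  set φ := aeval (R := R) (Fin.snoc X p : Fin (n + 1) → MvPolynomial (Fin n) R)
  have hsection (q : MvPolynomial (Fin n) R) : φ (rename Fin.castSucc q) = q :=
    AlgHom.congr_fun (aeval_snoc_comp_rename_castSucc p) q
  have hretract : (Ideal.Quotient.mkₐ R K).comp ((rename Fin.castSucc).comp φ) =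
      Ideal.Quotient.mkₐ R K := by
    ext i
    refine Fin.lastCases ?_ (fun j ↦ ?_) i
    · simp only [AlgHom.comp_apply, Ideal.Quotient.mkₐ_eq_mk, φ, aeval_X, Fin.snoc_last,
        Ideal.Quotient.eq]
      rw [← neg_sub]
      exact K.neg_mem (Ideal.mem_span_singleton_self _)
    · simp [φ]
  apply le_antisymm
  · intro q hq
    have hq' := AlgHom.congr_fun hretract q
    rw [AlgHom.comp_apply, AlgHom.comp_apply, RingHom.mem_ker.mp hq, map_zero, map_zero,
      Ideal.Quotient.mkₐ_eq_mk, eq_comm, Ideal.Quotient.eq_zero_iff_mem] at hq'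
    exact hq'
  · rw [Ideal.span_le, Set.singleton_subset_iff, SetLike.mem_coe, RingHom.mem_ker, map_sub,
      hsection, aeval_X, Fin.snoc_last, sub_self]

end MvPolynomial

section Substitution

variable {R : Type*} [CommRing R]

theorem vec_X_X_two_mul_eq_snoc :
    (![X 0, X 1, 2 * X 0] : Fin 3 → MvPolynomial (Fin 2) R) = Fin.snoc X (2 * X 0) := by
  ext i : 1
  fin_cases i <;> rfl

theorem aeval_vec_X_X_two_mul_surjective :
    Function.Surjective (aeval (R := R) (![X 0, X 1, 2 * X 0] : Fin 3 → MvPolynomial (Fin 2) R)) := by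
  rw [vec_X_X_two_mul_eq_snoc]
  exact aeval_snoc_surjective _

theorem ker_aeval_vec_X_X_two_mul :
    RingHom.ker (aeval (R := R) (![X 0, X 1, 2 * X 0] : Fin 3 → MvPolynomial (Fin 2) R)) =
      Ideal.span {X 2 - 2 * X 0} := by
  rw [vec_X_X_two_mul_eq_snoc, ker_aeval_snoc]
  simp [map_ofNat]

end Substitution

/-- In ℤ[λ₁, λ₂, t] (with λ₁ = X 0, λ₂ = X 1, t = X 2), with r₁, r₂, r₃ as indicated,
the ideal (r₁, r₂, r₃, t − 2λ₁) equals (t − 2λ₁, 24λ₁² − 48λ₂, 20λ₁λ₂); equivalently,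
ℤ[λ₁, λ₂, t]/(r₁, r₂, r₃, t − 2λ₁) ≅ ℤ[λ₁, λ₂]/(24λ₁² − 48λ₂, 20λ₁λ₂), the isomorphism
being induced by λ₁ ↦ λ₁, λ₂ ↦ λ₂, t ↦ 2λ₁. -/
theorem stmt10 (r1 r2 r3 : MvPolynomial (Fin 3) ℤ)
    (hr1 : r1 = 20 * X 0 * X 1 + ((X 2) ^ 2 - X 0 * X 2 - 44 * X 1) * (X 2 - 2 * X 0))
    (hr2 : r2 = 24 * (X 0) ^ 2 - 48 * X 1 + (12 * X 2 - 48 * X 0) * (X 2 - 2 * X 0))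
    (hr3 : r3 = 60 * ((X 0) ^ 2 - 4 * X 1) * (X 2 - 3 * X 0) * (X 2 - 2 * X 0)) :
    Ideal.span {r1, r2, r3, X 2 - 2 * X 0} =
      Ideal.span ({X 2 - 2 * X 0, 24 * (X 0) ^ 2 - 48 * X 1, 20 * X 0 * X 1} :
        Set (MvPolynomial (Fin 3) ℤ)) ∧
    ∃ e : (MvPolynomial (Fin 3) ℤ ⧸ Ideal.span {r1, r2, r3, X 2 - 2 * X 0}) ≃+*
        (MvPolynomial (Fin 2) ℤ ⧸
          Ideal.span ({24 * (X 0) ^ 2 - 48 * X 1, 20 * X 0 * X 1} :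
            Set (MvPolynomial (Fin 2) ℤ))),
      ∀ p : MvPolynomial (Fin 3) ℤ,
        e (Ideal.Quotient.mk (Ideal.span {r1, r2, r3, X 2 - 2 * X 0}) p) =
          Ideal.Quotient.mk
            (Ideal.span ({24 * (X 0) ^ 2 - 48 * X 1, 20 * X 0 * X 1} :
              Set (MvPolynomial (Fin 2) ℤ)))
            (aeval ![X 0, X 1, 2 * X 0] p) := by
  set φ : MvPolynomial (Fin 3) ℤ →ₐ[ℤ] MvPolynomial (Fin 2) ℤ := aeval ![X 0, X 1, 2 * X 0]
  set J := Ideal.span ({24 * (X 0) ^ 2 - 48 * X 1, 20 * X 0 * X 1} : Set (MvPolynomial (Fin 2) ℤ))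
  have hφ : Function.Surjective φ := aeval_vec_X_X_two_mul_surjective
  have hcomap {s : Set (MvPolynomial (Fin 3) ℤ)} (hs : X 2 - 2 * X 0 ∈ s)
      (himage : φ '' s = insert 0 {24 * X 0 ^ 2 - 48 * X 1, 20 * X 0 * X 1}) :
      Ideal.span s = J.comap φ := by
    rw [Ideal.span_eq_comap_span_image hφ, himage, Ideal.span_insert_zero]
    rw [ker_aeval_vec_X_X_two_mul, Ideal.span_le, Set.singleton_subset_iff]
    exact Ideal.subset_span hs
  have hI : Ideal.span {r1, r2, r3, X 2 - 2 * X 0} = J.comap φ := by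
    refine hcomap (by simp) (Set.ext fun y ↦ ?_)
    simp [φ, hr1, hr2, hr3, map_ofNat]
    tauto
  have hI' : Ideal.span {X 2 - 2 * X 0, 24 * (X 0) ^ 2 - 48 * X 1, 20 * X 0 * X 1} = J.comap φ := by
    refine hcomap (by simp) (Set.ext fun y ↦ ?_)
    simp [φ, map_ofNat, eq_comm]
  refine ⟨hI.trans hI'.symm, (Ideal.quotEquivOfEq hI).trans (Ideal.quotientComapEquivOfSurjective hφ J),
    fun p ↦ ?_⟩
  rw [RingEquiv.trans_apply, Ideal.quotEquivOfEq_mk, Ideal.quotientComapEquivOfSurjective_mk]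
end

section
/- Let ℓ be a prime and ℤ_ℓ the ring of ℓ-adic integers. In the polynomial ring ℤ_ℓ[λ₁, λ₂, t], set r₁ = 20λ₁λ₂ + (t² − λ₁t − 44λ₂)(t − 2λ₁), r₂ = 24λ₁² − 48λ₂ + (12t − 48λ₁)(t − 2λ₁), r₃ = 60(λ₁² − 4λ₂)(t − 3λ₁)(t − 2λ₁), and let Q = ℤ_ℓ[λ₁, λ₂, t]/(r₁, r₂, r₃). Then the kernel of multiplication by (the image of) t − 2λ₁ on Q is the ideal of Q generated by the images of the two elements 60(λ₁² − 4λ₂)(t − 3λ₁) and 5λ₁λ₂·(12t − 48λ₁) − (6λ₁² − 12λ₂)·(t² − λ₁t − 44λ₂). -/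
/-!
Write `s = t − 2λ₁`, `P = t² − λ₁t − 44λ₂` and `Q = 12t − 48λ₁`, so that `r₁ = 20λ₁λ₂ + P s`,
`r₂ = 24(λ₁² − 2λ₂) + Q s` and `r₃ = g₁ s`.
If `s p = x r₁ + y r₂ + z r₃`, then reducing modulo `s` gives a syzygy
`20λ₁λ₂ x + 24(λ₁² − 2λ₂) y ≡ 0`. Since `5λ₁λ₂` and `6(λ₁² − 2λ₂)` are relatively prime, every
such syzygy is, modulo `s`, a multiple of `(6(λ₁² − 2λ₂), −5λ₁λ₂)`; substituting back and
cancelling `s` writes `p` as a combination of `g₁`, `g₂ = 5λ₁λ₂ Q − 6(λ₁² − 2λ₂) P`, `r₁` and `r₂`.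
Conversely `s g₁ = r₃` and `s g₂ = 5λ₁λ₂ r₂ − 6(λ₁² − 2λ₂) r₁`.
-/

open MvPolynomial

theorem IsRelPrime.exists_eq_mul_of_mul_add_mul_eq_zero {R : Type*} [CommRing R] [IsDomain R]
    [DecompositionMonoid R] {a b x y : R} (hab : IsRelPrime a b) (ha : a ≠ 0)
    (h : a * x + b * y = 0) : ∃ c, x = b * c ∧ y = -(a * c) := by
  have hdvd : a ∣ b * y := ⟨-x, by linear_combination h⟩
  obtain ⟨c, rfl⟩ := hab.dvd_of_dvd_mul_left hdvd
  refine ⟨-c, mul_left_cancel₀ ha ?_, by ring⟩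
  linear_combination h

theorem MvPolynomial.sub_aeval_mem {σ R : Type*} [CommRing R] {I : Ideal (MvPolynomial σ R)}
    {f : σ → MvPolynomial σ R} (hf : ∀ i, X i - f i ∈ I) (p : MvPolynomial σ R) :
    p - aeval f p ∈ I := by
  have hmk : Ideal.Quotient.mkₐ R I = (Ideal.Quotient.mkₐ R I).comp (aeval f) :=
    algHom_ext fun i => by simpa [Ideal.Quotient.mkₐ_eq_mk, Ideal.Quotient.eq] using hf i
  rw [← Ideal.Quotient.eq]
  exact DFunLike.congr_fun hmk p

theorem mul_mem_span_triple_iff {R : Type*} [CommRing R] {s a b a' b' P Q g : R}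
    (hs : IsLeftRegular s) (hab : a * b' = b * a')
    (hsyz : ∀ x y, a * x + b * y ∈ Ideal.span {s} →
      ∃ h, x - b' * h ∈ Ideal.span {s} ∧ y + a' * h ∈ Ideal.span {s})
    (p : R) :
    s * p ∈ Ideal.span {a + P * s, b + Q * s, g * s} ↔
      p ∈ Ideal.span {g, a' * Q - b' * P} ⊔ Ideal.span {a + P * s, b + Q * s, g * s} := by
  set I := Ideal.span {a + P * s, b + Q * s, g * s}
  have hr₁ : a + P * s ∈ I := Ideal.subset_span (by simp)
  have hr₂ : b + Q * s ∈ I := Ideal.subset_span (by simp)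
  have hr₃ : g * s ∈ I := Ideal.subset_span (by simp)
  constructor
  · intro hp
    obtain ⟨x, y, z, hxyz⟩ := Submodule.mem_span_triple.mp hp
    simp only [smul_eq_mul] at hxyz
    obtain ⟨h, hx, hy⟩ := hsyz x y <| Ideal.mem_span_singleton'.mpr
      ⟨p - x * P - y * Q - z * g, by linear_combination -hxyz⟩
    obtain ⟨x', hx'⟩ := Ideal.mem_span_singleton'.mp hx
    obtain ⟨y', hy'⟩ := Ideal.mem_span_singleton'.mp hy
    have hp' : p = z * g - h * (a' * Q - b' * P) + (x' * (a + P * s) + y' * (b + Q * s)) :=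
      hs <| by linear_combination -hxyz - (a + P * s) * hx' - (b + Q * s) * hy' + h * hab
    rw [hp']
    exact Submodule.add_mem_sup
      (Ideal.sub_mem _ (Ideal.mul_mem_left _ _ (Ideal.subset_span (by simp)))
        (Ideal.mul_mem_left _ _ (Ideal.subset_span (by simp))))
      (Ideal.add_mem _ (Ideal.mul_mem_left _ _ hr₁) (Ideal.mul_mem_left _ _ hr₂))
  · intro hp
    obtain ⟨j, hj, i, hi, rfl⟩ := Submodule.mem_sup.mp hp
    obtain ⟨m, n, rfl⟩ := Ideal.mem_span_pair.mp hj
    have hsg : s * (a' * Q - b' * P) = a' * (b + Q * s) - b' * (a + P * s) := by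
      linear_combination hab
    rw [mul_add, mul_add, mul_left_comm, mul_left_comm s n, hsg, mul_comm s g]
    exact Ideal.add_mem _ (Ideal.add_mem _ (Ideal.mul_mem_left _ _ hr₃)
      (Ideal.mul_mem_left _ _ (Ideal.sub_mem _ (Ideal.mul_mem_left _ _ hr₂)
        (Ideal.mul_mem_left _ _ hr₁)))) (Ideal.mul_mem_left _ _ hi)

section Specialization

variable {A : Type*} [CommRing A] [IsDomain A] [UniqueFactorizationMonoid A] [CharZero A]

theorem isRelPrime_five_mul_X_mul_X :
    IsRelPrime (5 * X 0 * X 1 : MvPolynomial (Fin 3) A) (6 * X 0 ^ 2 - 12 * X 1) := by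
  have hX₀ : IsRelPrime (X 0 : MvPolynomial (Fin 3) A) (6 * X 0 ^ 2 - 12 * X 1) := by
    refine X_prime.irreducible.isRelPrime_iff_not_dvd.mpr fun hd => ?_
    simpa using map_dvd (eval ![0, 1, 0]) hd
  have hX₁ : IsRelPrime (X 1 : MvPolynomial (Fin 3) A) (6 * X 0 ^ 2 - 12 * X 1) := by
    refine X_prime.irreducible.isRelPrime_iff_not_dvd.mpr fun hd => ?_
    simpa using map_dvd (eval ![1, 0, 0]) hd
  have h₅ : IsRelPrime (5 : MvPolynomial (Fin 3) A) (6 * X 0 ^ 2 - 12 * X 1) := by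
    intro d hd₅ hd
    obtain ⟨e, he₅, rfl⟩ :=
      (dvd_C_iff_exists (f := d) (by norm_num : (5 : A) ≠ 0)).mp (by rwa [map_ofNat])
    have he₆ : e ∣ 6 := by simpa using map_dvd (eval ![1, 0, 0]) hd
    have he₁ := dvd_sub he₆ he₅
    norm_num at he₁
    exact (isUnit_of_dvd_one he₁).map C
  exact (h₅.mul_left hX₀).mul_left hX₁

theorem exists_syzygy_mod_X_two_sub_two_mul_X_zero (x y : MvPolynomial (Fin 3) A)
    (hxy : 20 * X 0 * X 1 * x + (24 * X 0 ^ 2 - 48 * X 1) * y ∈ Ideal.span {X 2 - 2 * X 0}) :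
    ∃ h, x - (6 * X 0 ^ 2 - 12 * X 1) * h ∈ Ideal.span {X 2 - 2 * X 0} ∧
      y + 5 * X 0 * X 1 * h ∈ Ideal.span {X 2 - 2 * X 0} := by
  set f : Fin 3 → MvPolynomial (Fin 3) A := ![X 0, X 1, 2 * X 0]
  have hf : ∀ i, X i - f i ∈ Ideal.span {(X 2 - 2 * X 0 : MvPolynomial (Fin 3) A)} := by
    intro i; fin_cases i <;> simp [f]
  obtain ⟨k, hk⟩ := Ideal.mem_span_singleton'.mp hxy
  have hsyz : 5 * X 0 * X 1 * aeval f x + (6 * X 0 ^ 2 - 12 * X 1) * aeval f y = 0 := by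
    have hk' := congrArg (aeval f) hk
    have hf₀ : f 0 = X 0 := rfl
    have hf₁ : f 1 = X 1 := rfl
    have hf₂ : f 2 = 2 * X 0 := rfl
    simp only [map_mul, map_sub, map_add, map_pow, map_ofNat, aeval_X, hf₀, hf₁, hf₂] at hk'
    refine (mul_eq_zero.mp (?_ : (4 : MvPolynomial (Fin 3) A) * _ = 0)).resolve_left (by norm_num)
    linear_combination -hk'
  have ha : (5 * X 0 * X 1 : MvPolynomial (Fin 3) A) ≠ 0 := fun h => by
    simpa using congrArg (eval 1) h
  obtain ⟨h, hx, hy⟩ := isRelPrime_five_mul_X_mul_X.exists_eq_mul_of_mul_add_mul_eq_zero ha hsyz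
  refine ⟨h, ?_, ?_⟩
  · rw [← hx]
    exact sub_aeval_mem hf x
  · rw [← sub_neg_eq_add, ← hy]
    exact sub_aeval_mem hf y

end Specialization

/-- Let ℓ be a prime and ℤ_[ℓ] the ℓ-adic integers.  In ℤ_[ℓ][λ₁, λ₂, t]
(with λ₁ = X 0, λ₂ = X 1, t = X 2), let Q be the quotient by (r₁, r₂, r₃).  Then the
kernel of multiplication by the image of t − 2λ₁ on Q is the ideal generated by the
images of 60(λ₁² − 4λ₂)(t − 3λ₁) and 5λ₁λ₂(12t − 48λ₁) − (6λ₁² − 12λ₂)(t² − λ₁t − 44λ₂). -/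
theorem stmt12 (ℓ : ℕ) [Fact (Nat.Prime ℓ)]
    (r1 r2 r3 g1 g2 : MvPolynomial (Fin 3) ℤ_[ℓ])
    (hr1 : r1 = 20 * X 0 * X 1 + ((X 2) ^ 2 - X 0 * X 2 - 44 * X 1) * (X 2 - 2 * X 0))
    (hr2 : r2 = 24 * (X 0) ^ 2 - 48 * X 1 + (12 * X 2 - 48 * X 0) * (X 2 - 2 * X 0))
    (hr3 : r3 = 60 * ((X 0) ^ 2 - 4 * X 1) * (X 2 - 3 * X 0) * (X 2 - 2 * X 0))
    (hg1 : g1 = 60 * ((X 0) ^ 2 - 4 * X 1) * (X 2 - 3 * X 0))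
    (hg2 : g2 = 5 * X 0 * X 1 * (12 * X 2 - 48 * X 0) -
      (6 * (X 0) ^ 2 - 12 * X 1) * ((X 2) ^ 2 - X 0 * X 2 - 44 * X 1)) :
    ∀ q : MvPolynomial (Fin 3) ℤ_[ℓ] ⧸ Ideal.span {r1, r2, r3},
      Ideal.Quotient.mk (Ideal.span {r1, r2, r3}) (X 2 - 2 * X 0) * q = 0 ↔
        q ∈ Ideal.span {Ideal.Quotient.mk (Ideal.span {r1, r2, r3}) g1,
          Ideal.Quotient.mk (Ideal.span {r1, r2, r3}) g2} := by
  subst hr1 hr2 hr3 hg1 hg2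
  intro q
  obtain ⟨p, rfl⟩ := Ideal.Quotient.mk_surjective q
  have hs : IsLeftRegular (X 2 - 2 * X 0 : MvPolynomial (Fin 3) ℤ_[ℓ]) :=
    (IsRegular.of_ne_zero fun h => by simpa using congrArg (eval ![0, 0, 1]) h).left
  rw [← map_mul, Ideal.Quotient.eq_zero_iff_mem, ← Set.image_pair, ← Ideal.map_span,
    Ideal.mem_quotient_iff_mem_sup]
  exact mul_mem_span_triple_iff hs (by ring) exists_syzygy_mod_X_two_sub_two_mul_X_zero p
end

section
/- Let I ⊂ ℤ[λ₁, λ₂, γ] be the ideal (2γ, γ² + λ₁γ, 24λ₁² − 48λ₂, 24λ₁λ₂), and grade ℤ[λ₁, λ₂, γ] with deg λ₁ = deg γ = 1 and deg λ₂ = 2. Then for a homogeneous polynomial f of degree 3, the product (γ − λ₁)·f lies in I if and only if f is congruent modulo I to one of the four polynomials 0, γλ₁², γλ₂, γ(λ₁² + λ₂). In particular, γλ₁², γλ₂ and γ(λ₁² + λ₂) are the only nonzero degree-3 elements of ℤ[λ₁, λ₂, γ]/I annihilated by γ − λ₁, and they are pairwise distinct and nonzero in the quotient. -/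
/-!
Modulo `I`, `(γ - λ₁) γ = (γ² + λ₁γ) - λ₁ · 2γ` vanishes, so `γ - λ₁` kills every multiple of `γ`.
A degree-3 polynomial is `a λ₁³ + b λ₁λ₂ + γ · q`, and using `γ² ≡ -λ₁γ`, `2γ ≡ 0` the part `γ · q`
reduces to `ε₁ γλ₁² + ε₂ γλ₂` with `ε₁, ε₂ ∈ {0, 1}`. Setting `γ = 0` over `ℤ/24` kills `I` and
turns `(γ - λ₁) f` into `-λ₁ (a λ₁³ + b λ₁λ₂)`, so `24 ∣ a, b`, and then `a λ₁³ + b λ₁λ₂ ∈ I`.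
Evaluating at `λ₁ = γ = 1` over `ℤ/2`, which also kills `I`, separates the three classes
`γλ₁², γλ₂, γ(λ₁² + λ₂)` from `0` and from each other.
-/

open MvPolynomial

namespace Delta1

theorem weight_fin_three (w : Fin 3 → ℕ) (d : Fin 3 →₀ ℕ) :
    Finsupp.weight w d = d 0 * w 0 + d 1 * w 1 + d 2 * w 2 := by
  simp [Finsupp.weight_apply, Finsupp.sum_fintype, Fin.sum_univ_three]

theorem monomial_fin_three {R : Type*} [CommSemiring R] (d : Fin 3 →₀ ℕ) (c : R) :
    monomial d c = C c * X 0 ^ d 0 * X 1 ^ d 1 * X 2 ^ d 2 := by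
  simp [monomial_eq, Finsupp.prod_fintype, Fin.prod_univ_three, mul_assoc]

theorem exists_eq_of_isWeightedHomogeneous_three {f : MvPolynomial (Fin 3) ℤ}
    (hf : f.IsWeightedHomogeneous ![1, 2, 1] 3) :
    ∃ a b c d e g : ℤ, f = C a * X 0 ^ 3 + C b * X 0 * X 1 + C c * X 0 ^ 2 * X 2 +
      C d * X 1 * X 2 + C e * X 0 * X 2 ^ 2 + C g * X 2 ^ 3 := by
  rw [f.as_sum]
  refine Finset.sum_induction _ (fun p => ∃ a b c d e g : ℤ, p = C a * X 0 ^ 3 + C b * X 0 * X 1 +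
    C c * X 0 ^ 2 * X 2 + C d * X 1 * X 2 + C e * X 0 * X 2 ^ 2 + C g * X 2 ^ 3) ?_ ?_ ?_
  · rintro _ _ ⟨a, b, c, d, e, g, rfl⟩ ⟨a', b', c', d', e', g', rfl⟩
    exact ⟨a + a', b + b', c + c', d + d', e + e', g + g', by simp only [map_add]; ring⟩
  · exact ⟨0, 0, 0, 0, 0, 0, by simp⟩
  intro m hm
  have hm : m 0 + m 1 * 2 + m 2 = 3 := by
    simpa [weight_fin_three] using hf (mem_support_iff.mp hm)
  rw [monomial_fin_three]
  set k := coeff m f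
  obtain ⟨h0, h1, h2⟩ | ⟨h0, h1, h2⟩ | ⟨h0, h1, h2⟩ | ⟨h0, h1, h2⟩ | ⟨h0, h1, h2⟩ | ⟨h0, h1, h2⟩ :
      (m 0 = 3 ∧ m 1 = 0 ∧ m 2 = 0) ∨ (m 0 = 1 ∧ m 1 = 1 ∧ m 2 = 0) ∨
      (m 0 = 2 ∧ m 1 = 0 ∧ m 2 = 1) ∨ (m 0 = 0 ∧ m 1 = 1 ∧ m 2 = 1) ∨
      (m 0 = 1 ∧ m 1 = 0 ∧ m 2 = 2) ∨ (m 0 = 0 ∧ m 1 = 0 ∧ m 2 = 3) := by omega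
  all_goals rw [h0, h1, h2]
  · exact ⟨k, 0, 0, 0, 0, 0, by simp⟩
  · exact ⟨0, k, 0, 0, 0, 0, by simp⟩
  · exact ⟨0, 0, k, 0, 0, 0, by simp⟩
  · exact ⟨0, 0, 0, k, 0, 0, by simp⟩
  · exact ⟨0, 0, 0, 0, k, 0, by simp⟩
  · exact ⟨0, 0, 0, 0, 0, k, by simp⟩

noncomputable def chowIdeal : Ideal (MvPolynomial (Fin 3) ℤ) :=
  Ideal.span {2 * X 2, X 2 ^ 2 + X 0 * X 2, 24 * X 0 ^ 2 - 48 * X 1, 24 * X 0 * X 1}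

theorem aeval_eq_zero_of_mem_chowIdeal {R : Type*} [CommRing R] {p : Fin 3 → R}
    (h₁ : 2 * p 2 = 0) (h₂ : p 2 ^ 2 + p 0 * p 2 = 0) (h₃ : 24 * p 0 ^ 2 - 48 * p 1 = 0)
    (h₄ : 24 * p 0 * p 1 = 0) {g : MvPolynomial (Fin 3) ℤ} (hg : g ∈ chowIdeal) :
    aeval p g = 0 := by
  have : chowIdeal ≤ RingHom.ker (aeval p) := by
    rw [chowIdeal, Ideal.span_le]
    rintro _ (rfl | rfl | rfl | rfl) <;> simp [h₁, h₂, h₃, h₄]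
  exact this hg

theorem notMem_chowIdeal_of_aeval_ne_zero {g : MvPolynomial (Fin 3) ℤ} (t : ZMod 2)
    (hg : aeval ![1, t, 1] g ≠ 0) : g ∉ chowIdeal :=
  fun h => hg (aeval_eq_zero_of_mem_chowIdeal (by fin_cases t <;> decide)
    (by fin_cases t <;> decide) (by fin_cases t <;> decide) (by fin_cases t <;> decide) h)

theorem aeval_eq_zero_of_X2_sub_X0_mul_mem {f : MvPolynomial (Fin 3) ℤ} (t : ZMod 24)
    (h : (X 2 - X 0) * f ∈ chowIdeal) : aeval ![1, t, 0] f = 0 := by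
  simpa using aeval_eq_zero_of_mem_chowIdeal (p := ![1, t, 0]) (by fin_cases t <;> decide)
    (by fin_cases t <;> decide) (by fin_cases t <;> decide) (by fin_cases t <;> decide) h

local notation "π" => Ideal.Quotient.mk chowIdeal

theorem chowIdeal_relations :
    2 * π (X 2) = 0 ∧ π (X 2) ^ 2 + π (X 0) * π (X 2) = 0 ∧
      24 * π (X 0) ^ 2 - 48 * π (X 1) = 0 ∧ 24 * π (X 0) * π (X 1) = 0 := by
  have h : ∀ g ∈ ({2 * X 2, X 2 ^ 2 + X 0 * X 2, 24 * X 0 ^ 2 - 48 * X 1, 24 * X 0 * X 1} :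
      Set (MvPolynomial (Fin 3) ℤ)), π g = 0 :=
    fun g hg => Ideal.Quotient.eq_zero_iff_mem.mpr (Ideal.subset_span hg)
  simpa only [Set.mem_insert_iff, Set.mem_singleton_iff, forall_eq_or_imp, forall_eq, map_add,
    map_sub, map_mul, map_pow, map_ofNat] using h

theorem mk_X2_sub_mk_X0_mul_mk_X2 : (π (X 2) - π (X 0)) * π (X 2) = 0 := by
  obtain ⟨h₁, h₂, -, -⟩ := chowIdeal_relations
  linear_combination h₂ - π (X 0) * h₁

theorem intCast_mul_eq_emod_two_mul {R : Type*} [CommRing R] {z : R} (hz : 2 * z = 0) (n : ℤ) :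
    (n : R) * z = ((n % 2 : ℤ) : R) * z := by
  have h : (n : R) = ((n % 2 + 2 * (n / 2) : ℤ) : R) := by rw [Int.emod_add_mul_ediv]
  rw [h]
  push_cast
  linear_combination ((n / 2 : ℤ) : R) * hz

theorem mk_cubic_eq_emod_two (a b c d e g : ℤ) :
    π (C (24 * a) * X 0 ^ 3 + C (24 * b) * X 0 * X 1 + C c * X 0 ^ 2 * X 2 + C d * X 1 * X 2 +
      C e * X 0 * X 2 ^ 2 + C g * X 2 ^ 3) =
      ((c + e + g) % 2 : ℤ) * (π (X 2) * π (X 0) ^ 2) + (d % 2 : ℤ) * (π (X 2) * π (X 1)) := by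
  obtain ⟨hz, hzz, hx, hxy⟩ := chowIdeal_relations
  rw [← intCast_mul_eq_emod_two_mul (by linear_combination π (X 0) ^ 2 * hz),
    ← intCast_mul_eq_emod_two_mul (by linear_combination π (X 1) * hz)]
  simp only [map_add, map_mul, map_pow, eq_intCast, map_intCast]
  push_cast
  linear_combination (a : _) * π (X 0) * hx + (2 * (a : _) + (b : _)) * hxy +
    (e * π (X 0) + g * (π (X 2) - π (X 0))) * hzz - e * π (X 0) ^ 2 * hz

theorem mem_or_sub_mem_of_X2_sub_X0_mul_mem {f : MvPolynomial (Fin 3) ℤ}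
    (hf : f.IsWeightedHomogeneous ![1, 2, 1] 3) (h : (X 2 - X 0) * f ∈ chowIdeal) :
    f ∈ chowIdeal ∨ f - X 2 * X 0 ^ 2 ∈ chowIdeal ∨ f - X 2 * X 1 ∈ chowIdeal ∨
      f - X 2 * (X 0 ^ 2 + X 1) ∈ chowIdeal := by
  obtain ⟨a, b, c, d, e, g, rfl⟩ := exists_eq_of_isWeightedHomogeneous_three hf
  have h₀ : (a : ZMod 24) = 0 := by simpa using aeval_eq_zero_of_X2_sub_X0_mul_mem 0 h
  have h₁ : (a + b : ZMod 24) = 0 := by simpa using aeval_eq_zero_of_X2_sub_X0_mul_mem 1 h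
  obtain ⟨a, rfl⟩ : 24 ∣ a := (ZMod.intCast_zmod_eq_zero_iff_dvd a 24).mp h₀
  obtain ⟨b, rfl⟩ : 24 ∣ b := (ZMod.intCast_zmod_eq_zero_iff_dvd b 24).mp (by simpa [h₀] using h₁)
  simp only [← Ideal.Quotient.eq]
  simp only [← Ideal.Quotient.eq_zero_iff_mem, mk_cubic_eq_emod_two]
  rcases Int.emod_two_eq_zero_or_one (c + e + g) with h1 | h1 <;>
    rcases Int.emod_two_eq_zero_or_one d with h2 | h2 <;>
    simp [h1, h2, mul_add]

theorem X2_sub_X0_mul_mem_of_sub_X2_mul_mem {f q : MvPolynomial (Fin 3) ℤ}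
    (h : f - X 2 * q ∈ chowIdeal) : (X 2 - X 0) * f ∈ chowIdeal := by
  rw [← Ideal.Quotient.eq_zero_iff_mem, map_mul, map_sub, Ideal.Quotient.eq.mpr h, map_mul]
  linear_combination π q * mk_X2_sub_mk_X0_mul_mk_X2

theorem X2_sub_X0_mul_mem_iff {f : MvPolynomial (Fin 3) ℤ}
    (hf : f.IsWeightedHomogeneous ![1, 2, 1] 3) :
    (X 2 - X 0) * f ∈ chowIdeal ↔ f ∈ chowIdeal ∨ f - X 2 * X 0 ^ 2 ∈ chowIdeal ∨
      f - X 2 * X 1 ∈ chowIdeal ∨ f - X 2 * (X 0 ^ 2 + X 1) ∈ chowIdeal := by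
  refine ⟨mem_or_sub_mem_of_X2_sub_X0_mul_mem hf, ?_⟩
  rintro (h | h | h | h)
  · exact Ideal.mul_mem_left _ _ h
  all_goals exact X2_sub_X0_mul_mem_of_sub_X2_mul_mem h

end Delta1

/-- Let I = (2γ, γ² + λ₁γ, 24λ₁² − 48λ₂, 24λ₁λ₂) in ℤ[λ₁, λ₂, γ]
(with λ₁ = X 0, λ₂ = X 1, γ = X 2), graded by deg λ₁ = deg γ = 1, deg λ₂ = 2.
For a homogeneous f of degree 3, (γ − λ₁)f ∈ I iff f is congruent mod I to one of
0, γλ₁², γλ₂, γ(λ₁² + λ₂); moreover these three elements are nonzero and pairwise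
distinct in the quotient. -/
theorem stmt14 (I : Ideal (MvPolynomial (Fin 3) ℤ))
    (hI : I = Ideal.span {2 * X 2, (X 2) ^ 2 + X 0 * X 2,
      24 * (X 0) ^ 2 - 48 * X 1, 24 * X 0 * X 1}) :
    (∀ f : MvPolynomial (Fin 3) ℤ, f.IsWeightedHomogeneous ![1, 2, 1] 3 →
      ((X 2 - X 0) * f ∈ I ↔
        (f ∈ I ∨ f - X 2 * (X 0) ^ 2 ∈ I ∨ f - X 2 * X 1 ∈ I ∨
          f - X 2 * ((X 0) ^ 2 + X 1) ∈ I))) ∧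
    (X 2 * (X 0) ^ 2 ∉ I ∧ X 2 * X 1 ∉ I ∧ X 2 * ((X 0) ^ 2 + X 1) ∉ I) ∧
    (X 2 * (X 0) ^ 2 - X 2 * X 1 ∉ I ∧
      X 2 * (X 0) ^ 2 - X 2 * ((X 0) ^ 2 + X 1) ∉ I ∧
      X 2 * X 1 - X 2 * ((X 0) ^ 2 + X 1) ∉ I) := by
  obtain rfl : I = Delta1.chowIdeal := hI
  refine ⟨fun f hf => Delta1.X2_sub_X0_mul_mem_iff hf, ⟨?_, ?_, ?_⟩, ?_, ?_, ?_⟩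
  · exact Delta1.notMem_chowIdeal_of_aeval_ne_zero 0 (by simp)
  · exact Delta1.notMem_chowIdeal_of_aeval_ne_zero 1 (by simp)
  · exact Delta1.notMem_chowIdeal_of_aeval_ne_zero 0 (by simp)
  · exact Delta1.notMem_chowIdeal_of_aeval_ne_zero 0 (by simp)
  · exact Delta1.notMem_chowIdeal_of_aeval_ne_zero 1 (by simp)
  · exact Delta1.notMem_chowIdeal_of_aeval_ne_zero 0 (by simp)
end

section
/- In the quotient ring 𝔽₂[γ, δ₁, λ₁, λ₂]/(γ² + λ₁γ, δ₁² + δ₁γ), the three elements δ₁(δ₁ + λ₁)λ₁², δ₁(δ₁ + λ₁)λ₂, and δ₁(δ₁ + λ₁)(λ₁² + λ₂) are all nonzero. -/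
open MvPolynomial

open DualNumber in
private lemma stmt15key (c : DualNumber (ZMod 2)) {p : MvPolynomial (Fin 4) (ZMod 2)}
    (hp : p ∈ Ideal.span {(X 0 : MvPolynomial (Fin 4) (ZMod 2)) ^ 2 + X 2 * X 0,
      (X 1) ^ 2 + X 1 * X 0}) :
    aeval ![0, ε, 1, c] p = 0 := by
  have : Ideal.span {(X 0 : MvPolynomial (Fin 4) (ZMod 2)) ^ 2 + X 2 * X 0, (X 1) ^ 2 + X 1 * X 0}
      ≤ RingHom.ker (aeval ![0, ε, 1, c]).toRingHom := by
    rw [Ideal.span_le]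
    rintro q (rfl | rfl) <;>
      simp [RingHom.mem_ker, sq, eps_mul_eps]
  exact this hp

open DualNumber in
private lemma stmt15eps : (ε : DualNumber (ZMod 2)) ≠ 0 := by
  intro h
  have := congrArg TrivSqZeroExt.snd h
  simp at this

/-- In 𝔽₂[γ, δ₁, λ₁, λ₂]/(γ² + λ₁γ, δ₁² + δ₁γ) (with γ = X 0, δ₁ = X 1, λ₁ = X 2, λ₂ = X 3),
the elements δ₁(δ₁ + λ₁)λ₁², δ₁(δ₁ + λ₁)λ₂ and δ₁(δ₁ + λ₁)(λ₁² + λ₂) are all nonzero,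
i.e. the corresponding polynomials do not lie in the ideal. -/
theorem stmt15 (I : Ideal (MvPolynomial (Fin 4) (ZMod 2)))
    (hI : I = Ideal.span {(X 0) ^ 2 + X 2 * X 0, (X 1) ^ 2 + X 1 * X 0}) :
    Ideal.Quotient.mk I (X 1 * (X 1 + X 2) * (X 2) ^ 2) ≠ 0 ∧
    Ideal.Quotient.mk I (X 1 * (X 1 + X 2) * X 3) ≠ 0 ∧
    Ideal.Quotient.mk I (X 1 * (X 1 + X 2) * ((X 2) ^ 2 + X 3)) ≠ 0 := by
  open DualNumber in
  refine ⟨?_, ?_, ?_⟩ <;> intro h <;> rw [Ideal.Quotient.eq_zero_iff_mem, hI] at h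
  · have := stmt15key 0 h
    simp only [map_mul, map_add, map_pow, aeval_X, Matrix.cons_val_one, Matrix.cons_val_zero,
      Matrix.head_cons, Matrix.cons_val_two, Matrix.cons_val_three, Matrix.tail_cons] at this
    apply stmt15eps
    rw [← this]
    ring_nf
    simp [sq, eps_mul_eps]
  · have := stmt15key 1 h
    simp only [map_mul, map_add, map_pow, aeval_X, Matrix.cons_val_one, Matrix.cons_val_zero,
      Matrix.head_cons, Matrix.cons_val_two, Matrix.cons_val_three, Matrix.tail_cons] at this
    apply stmt15eps
    rw [← this]
    ring_nf
    simp [sq, eps_mul_eps]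
  · have := stmt15key 0 h
    simp only [map_mul, map_add, map_pow, aeval_X, Matrix.cons_val_one, Matrix.cons_val_zero,
      Matrix.head_cons, Matrix.cons_val_two, Matrix.cons_val_three, Matrix.tail_cons] at this
    apply stmt15eps
    rw [← this]
    ring_nf
    simp [sq, eps_mul_eps]
end

section
/- In the polynomial ring ℤ[λ₁, λ₂, δ₁], the ideal generated by the six elements 24λ₁² − 48λ₂, 20λ₁λ₂ − 4δ₁λ₂, 2(δ₁ + λ₁)·δ₁, ((δ₁ + λ₁)² + λ₁(δ₁ + λ₁))·δ₁, (24λ₁² − 48λ₂)·δ₁, and 24λ₁λ₂·δ₁ is equal to the ideal generated by the four elements 24λ₁² − 48λ₂, 20λ₁λ₂ − 4δ₁λ₂, δ₁³ + δ₁²λ₁, and 2δ₁² + 2δ₁λ₁. -/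
open MvPolynomial

/-- In ℤ[λ₁, λ₂, δ₁] (with λ₁ = X 0, λ₂ = X 1, δ₁ = X 2), the ideal generated by
24λ₁² − 48λ₂, 20λ₁λ₂ − 4δ₁λ₂, 2(δ₁ + λ₁)δ₁, ((δ₁ + λ₁)² + λ₁(δ₁ + λ₁))δ₁,
(24λ₁² − 48λ₂)δ₁, 24λ₁λ₂δ₁ equals the ideal generated by
24λ₁² − 48λ₂, 20λ₁λ₂ − 4δ₁λ₂, δ₁³ + δ₁²λ₁, 2δ₁² + 2δ₁λ₁. -/
theorem stmt16 :
    Ideal.span ({24 * (X 0) ^ 2 - 48 * X 1,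
        20 * X 0 * X 1 - 4 * X 2 * X 1,
        2 * (X 2 + X 0) * X 2,
        ((X 2 + X 0) ^ 2 + X 0 * (X 2 + X 0)) * X 2,
        (24 * (X 0) ^ 2 - 48 * X 1) * X 2,
        24 * X 0 * X 1 * X 2} : Set (MvPolynomial (Fin 3) ℤ)) =
      Ideal.span ({24 * (X 0) ^ 2 - 48 * X 1,
        20 * X 0 * X 1 - 4 * X 2 * X 1,
        (X 2) ^ 3 + (X 2) ^ 2 * X 0,
        2 * (X 2) ^ 2 + 2 * X 2 * X 0} : Set (MvPolynomial (Fin 3) ℤ)) := by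
  apply le_antisymm <;> rw [Ideal.span_le] <;> intro p hp <;>
    simp only [Set.mem_insert_iff, Set.mem_singleton_iff] at hp
  · have h1 : (24 * (X 0) ^ 2 - 48 * X 1 : MvPolynomial (Fin 3) ℤ) ∈
        Ideal.span ({24 * (X 0) ^ 2 - 48 * X 1, 20 * X 0 * X 1 - 4 * X 2 * X 1,
          (X 2) ^ 3 + (X 2) ^ 2 * X 0, 2 * (X 2) ^ 2 + 2 * X 2 * X 0} :
          Set (MvPolynomial (Fin 3) ℤ)) := Ideal.subset_span (by simp)
    have h2 : (20 * X 0 * X 1 - 4 * X 2 * X 1 : MvPolynomial (Fin 3) ℤ) ∈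
        Ideal.span ({24 * (X 0) ^ 2 - 48 * X 1, 20 * X 0 * X 1 - 4 * X 2 * X 1,
          (X 2) ^ 3 + (X 2) ^ 2 * X 0, 2 * (X 2) ^ 2 + 2 * X 2 * X 0} :
          Set (MvPolynomial (Fin 3) ℤ)) := Ideal.subset_span (by simp)
    have h3 : ((X 2) ^ 3 + (X 2) ^ 2 * X 0 : MvPolynomial (Fin 3) ℤ) ∈
        Ideal.span ({24 * (X 0) ^ 2 - 48 * X 1, 20 * X 0 * X 1 - 4 * X 2 * X 1,
          (X 2) ^ 3 + (X 2) ^ 2 * X 0, 2 * (X 2) ^ 2 + 2 * X 2 * X 0} :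
          Set (MvPolynomial (Fin 3) ℤ)) := Ideal.subset_span (by simp)
    have h4 : (2 * (X 2) ^ 2 + 2 * X 2 * X 0 : MvPolynomial (Fin 3) ℤ) ∈
        Ideal.span ({24 * (X 0) ^ 2 - 48 * X 1, 20 * X 0 * X 1 - 4 * X 2 * X 1,
          (X 2) ^ 3 + (X 2) ^ 2 * X 0, 2 * (X 2) ^ 2 + 2 * X 2 * X 0} :
          Set (MvPolynomial (Fin 3) ℤ)) := Ideal.subset_span (by simp)
    rcases hp with h | h | h | h | h | h <;> subst h
    · exact h1
    · exact h2
    · have : (2 * (X 2 + X 0) * X 2 : MvPolynomial (Fin 3) ℤ) =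
          2 * (X 2) ^ 2 + 2 * X 2 * X 0 := by ring
      rw [this]; exact h4
    · have : (((X 2 + X 0) ^ 2 + X 0 * (X 2 + X 0)) * X 2 : MvPolynomial (Fin 3) ℤ) =
          ((X 2) ^ 3 + (X 2) ^ 2 * X 0) + X 0 * (2 * (X 2) ^ 2 + 2 * X 2 * X 0) := by ring
      rw [this]; exact Ideal.add_mem _ h3 (Ideal.mul_mem_left _ _ h4)
    · exact Ideal.mul_mem_right _ _ h1
    · have : (24 * X 0 * X 1 * X 2 : MvPolynomial (Fin 3) ℤ) =
          X 2 * (20 * X 0 * X 1 - 4 * X 2 * X 1) + (2 * X 1) * (2 * (X 2) ^ 2 + 2 * X 2 * X 0)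
            := by ring
      rw [this]
      exact Ideal.add_mem _ (Ideal.mul_mem_left _ _ h2) (Ideal.mul_mem_left _ _ h4)
  · have h1 : (24 * (X 0) ^ 2 - 48 * X 1 : MvPolynomial (Fin 3) ℤ) ∈
        Ideal.span ({24 * (X 0) ^ 2 - 48 * X 1, 20 * X 0 * X 1 - 4 * X 2 * X 1,
          2 * (X 2 + X 0) * X 2, ((X 2 + X 0) ^ 2 + X 0 * (X 2 + X 0)) * X 2,
          (24 * (X 0) ^ 2 - 48 * X 1) * X 2, 24 * X 0 * X 1 * X 2} :
          Set (MvPolynomial (Fin 3) ℤ)) := Ideal.subset_span (by simp)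
    have h2 : (20 * X 0 * X 1 - 4 * X 2 * X 1 : MvPolynomial (Fin 3) ℤ) ∈
        Ideal.span ({24 * (X 0) ^ 2 - 48 * X 1, 20 * X 0 * X 1 - 4 * X 2 * X 1,
          2 * (X 2 + X 0) * X 2, ((X 2 + X 0) ^ 2 + X 0 * (X 2 + X 0)) * X 2,
          (24 * (X 0) ^ 2 - 48 * X 1) * X 2, 24 * X 0 * X 1 * X 2} :
          Set (MvPolynomial (Fin 3) ℤ)) := Ideal.subset_span (by simp)
    have h3 : (2 * (X 2 + X 0) * X 2 : MvPolynomial (Fin 3) ℤ) ∈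
        Ideal.span ({24 * (X 0) ^ 2 - 48 * X 1, 20 * X 0 * X 1 - 4 * X 2 * X 1,
          2 * (X 2 + X 0) * X 2, ((X 2 + X 0) ^ 2 + X 0 * (X 2 + X 0)) * X 2,
          (24 * (X 0) ^ 2 - 48 * X 1) * X 2, 24 * X 0 * X 1 * X 2} :
          Set (MvPolynomial (Fin 3) ℤ)) := Ideal.subset_span (by simp)
    have h4 : (((X 2 + X 0) ^ 2 + X 0 * (X 2 + X 0)) * X 2 : MvPolynomial (Fin 3) ℤ) ∈
        Ideal.span ({24 * (X 0) ^ 2 - 48 * X 1, 20 * X 0 * X 1 - 4 * X 2 * X 1,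
          2 * (X 2 + X 0) * X 2, ((X 2 + X 0) ^ 2 + X 0 * (X 2 + X 0)) * X 2,
          (24 * (X 0) ^ 2 - 48 * X 1) * X 2, 24 * X 0 * X 1 * X 2} :
          Set (MvPolynomial (Fin 3) ℤ)) := Ideal.subset_span (by simp)
    rcases hp with h | h | h | h <;> subst h
    · exact h1
    · exact h2
    · have : ((X 2) ^ 3 + (X 2) ^ 2 * X 0 : MvPolynomial (Fin 3) ℤ) =
          (((X 2 + X 0) ^ 2 + X 0 * (X 2 + X 0)) * X 2) - X 0 * (2 * (X 2 + X 0) * X 2) := by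
        ring
      rw [this]; exact Ideal.sub_mem _ h4 (Ideal.mul_mem_left _ _ h3)
    · have : (2 * (X 2) ^ 2 + 2 * X 2 * X 0 : MvPolynomial (Fin 3) ℤ) =
          2 * (X 2 + X 0) * X 2 := by ring
      rw [this]; exact h3
end
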